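/- arXiv:2305.01069 — 6 statements merged into one kernel-verified Lean document; each statement's English description precedes it below -/
import Mathlib

section
/- Let f be a non-negative monotone submodular function on an n-element set V and let k ≥ 2. Order the elements v_1,...,v_n so that f({v_1}) ≤ ... ≤ f({v_n}). Then the k-partition consisting of the singletons {v_1},...,{v_{k-1}} together with V \ {v_1,...,v_{k-1}} has objective value at most (2 - 1/k) times the minimum objective value over all k-partitions of V, where the objective of a partition is the sum of f over its parts. -/
/-- A partition of the ground set: pairwise disjoint nonempty parts whose union is `V`. -/
def IsPartition {V : Type*} [Fintype V] [DecidableEq V] (P : Finset (Finset V)) : Prop :=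
  (∀ p ∈ P, p.Nonempty) ∧ (P : Set (Finset V)).PairwiseDisjoint id ∧
    P.sup id = (Finset.univ : Finset V)

/-- A strictly monotone function `Fin m → ℕ` grows at least as fast as the identity. -/
lemma aux_strictMono_le {m : ℕ} (g : Fin m → ℕ) (hg : StrictMono g) :
    ∀ jv (h : jv < m), jv ≤ g ⟨jv, h⟩ := by
  intro jv
  induction jv with
  | zero => intro h; exact Nat.zero_le _
  | succ i ih =>
    intro h
    have hi : i < m := Nat.lt_of_succ_lt h
    have h1 := ih hi
    have h2 : g ⟨i, hi⟩ < g ⟨i + 1, h⟩ := hg (by simp [Fin.lt_def])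
    omega

/-- The sum of the `m` smallest values of a monotone sequence is at most the sum over any
`m`-element index set. -/
lemma sum_smallest_le {n m : ℕ} (w : Fin n → ℝ) (hw : ∀ i j : Fin n, i ≤ j → w i ≤ w j)
    (I : Finset (Fin n)) (hI : I.card = m) :
    ∑ i ∈ Finset.univ.filter (fun i : Fin n => (i : ℕ) < m), w i ≤ ∑ i ∈ I, w i := by
  have hmn : m ≤ n := by
    have := Finset.card_le_univ I
    simpa [hI] using this
  set φ := I.orderEmbOfFin hI with hφ
  have hR : ∑ i ∈ I, w i = ∑ j : Fin m, w (φ j) := by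
    refine (Finset.sum_bij (fun j _ => φ j) ?_ ?_ ?_ ?_).symm
    · intro j _; exact Finset.orderEmbOfFin_mem I hI j
    · intro a _ b _ hab; exact φ.injective hab
    · intro i hi
      have : i ∈ Set.range φ := by
        rw [Finset.range_orderEmbOfFin]; exact hi
      obtain ⟨j, hj⟩ := this
      exact ⟨j, Finset.mem_univ j, hj⟩
    · intro j _; rfl
  have hL : ∑ i ∈ Finset.univ.filter (fun i : Fin n => (i : ℕ) < m), w i
      = ∑ j : Fin m, w (Fin.castLE hmn j) := by
    refine (Finset.sum_bij (fun j _ => Fin.castLE hmn j) ?_ ?_ ?_ ?_).symm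
    · intro j _; simp [Fin.castLE]
    · intro a _ b _ hab; exact Fin.castLE_injective hmn hab
    · intro i hi
      simp only [Finset.mem_filter, Finset.mem_univ, true_and] at hi
      exact ⟨⟨(i : ℕ), hi⟩, Finset.mem_univ _, rfl⟩
    · intro j _; rfl
  rw [hL, hR]
  refine Finset.sum_le_sum fun j _ => hw _ _ ?_
  have hsm : StrictMono (fun j : Fin m => ((φ j : Fin n) : ℕ)) :=
    fun a b hab => by exact_mod_cast φ.strictMono hab
  have := aux_strictMono_le _ hsm (j : ℕ) j.isLt
  simpa [Fin.le_def] using this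

/-- Subadditivity of a nonnegative submodular function over a nonempty finite family. -/
lemma f_sup_le {V : Type*} [DecidableEq V] (f : Finset V → ℝ)
    (hsub : ∀ A B : Finset V, f (A ∩ B) + f (A ∪ B) ≤ f A + f B)
    (hnn : ∀ A : Finset V, 0 ≤ f A)
    (Q : Finset (Finset V)) (hne : Q.Nonempty) :
    f (Q.sup id) ≤ ∑ q ∈ Q, f q := by
  induction hne using Finset.Nonempty.cons_induction with
  | singleton a => simp
  | cons a s ha hs ih =>
    rw [Finset.sup_cons, Finset.sum_cons]
    simp only [id_eq]
    have h1 : f (a ∪ s.sup id) ≤ f a + f (s.sup id) := by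
      have := hsub a (s.sup id)
      have := hnn (a ∩ s.sup id)
      linarith
    have : (a ⊔ s.sup id : Finset V) = a ∪ s.sup id := rfl
    rw [this]
    linarith

/-- The cheapest singleton partitioning algorithm is a `(2 - 1/k)`-approximation for
monotone submodular `k`-partition: if the elements are ordered `v_1, ..., v_n` with
`f({v_1}) ≤ ... ≤ f({v_n})`, then the `k`-partition consisting of the singletons
`{v_1}, ..., {v_{k-1}}` together with `V \ {v_1, ..., v_{k-1}}` has objective value at
most `(2 - 1/k)` times that of any `k`-partition of `V`. -/
theorem cheapest_singleton_partitioning {V : Type*} [Fintype V] [DecidableEq V]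
    (f : Finset V → ℝ)
    (hsub : ∀ A B : Finset V, f (A ∩ B) + f (A ∪ B) ≤ f A + f B)
    (hmono : ∀ A B : Finset V, A ⊆ B → f A ≤ f B)
    (hnn : ∀ A : Finset V, 0 ≤ f A)
    (k : ℕ) (hk2 : 2 ≤ k) (hkn : k ≤ Fintype.card V)
    (e : Fin (Fintype.card V) ≃ V)
    (hsorted : ∀ i j : Fin (Fintype.card V), i ≤ j → f {e i} ≤ f {e j})
    (Q : Finset (Finset V)) (hQ : IsPartition Q) (hQk : Q.card = k) :
    (∑ i ∈ Finset.univ.filter (fun i : Fin (Fintype.card V) => (i : ℕ) < k - 1), f {e i})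
      + f (Finset.univ \
          (Finset.univ.filter (fun i : Fin (Fintype.card V) => (i : ℕ) < k - 1)).image
            (fun i => e i))
    ≤ (2 - 1 / (k : ℝ)) * ∑ q ∈ Q, f q := by
  obtain ⟨hQne, hQdisj, hQsup⟩ := hQ
  have hVne : Nonempty V := Fintype.card_pos_iff.mp (by omega)
  set OPT := ∑ q ∈ Q, f q with hOPT
  have hQnonempty : Q.Nonempty := Finset.card_pos.mp (by omega)
  -- Step 1: the big part costs at most OPT
  have hbig : f (Finset.univ \
      (Finset.univ.filter (fun i : Fin (Fintype.card V) => (i : ℕ) < k - 1)).image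
        (fun i => e i)) ≤ OPT := by
    refine le_trans (hmono _ Finset.univ (Finset.sdiff_subset)) ?_
    rw [← hQsup]
    exact f_sup_le f hsub hnn Q hQnonempty
  -- Step 2: representatives
  classical
  set u : Finset V → V := fun q => if h : q.Nonempty then h.choose else Classical.arbitrary V
    with hu_def
  have hu : ∀ q ∈ Q, u q ∈ q := by
    intro q hq
    have h := hQne q hq
    simp only [hu_def, dif_pos h]
    exact h.choose_spec
  have huinj : ∀ x ∈ Q, ∀ y ∈ Q, u x = u y → x = y := by
    intro x hx y hy hxy
    by_contra hne
    have hd : Disjoint x y := hQdisj hx hy hne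
    exact (Finset.disjoint_left.mp hd (hu x hx)) (hxy ▸ hu y hy)
  set T : Finset V := Q.image u with hT
  have hTcard : T.card = k := by rw [hT, Finset.card_image_of_injOn huinj, hQk]
  have hTsum : ∑ t ∈ T, f {t} ≤ OPT := by
    rw [hT, Finset.sum_image huinj]
    exact Finset.sum_le_sum fun q hq =>
      hmono _ _ (Finset.singleton_subset_iff.mpr (hu q hq))
  -- Step 3: drop the most expensive representative
  have hTne : T.Nonempty := Finset.card_pos.mp (by omega)
  obtain ⟨t0, ht0, hmax⟩ := Finset.exists_max_image T (fun t => f {t}) hTne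
  have hSsum : ∑ t ∈ T.erase t0, f {t} + f {t0} = ∑ t ∈ T, f {t} :=
    Finset.sum_erase_add T _ ht0
  have hkmax : ∑ t ∈ T, f {t} ≤ (k : ℝ) * f {t0} := by
    have := Finset.sum_le_card_nsmul T (fun t => f {t}) (f {t0}) (fun x hx => hmax x hx)
    rwa [hTcard, nsmul_eq_mul] at this
  -- Step 4: the k-1 cheapest singletons are at most sum over T.erase t0
  set I : Finset (Fin (Fintype.card V)) := (T.erase t0).image e.symm with hI
  have hIcard : I.card = k - 1 := by
    rw [hI, Finset.card_image_of_injective _ e.symm.injective,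
      Finset.card_erase_of_mem ht0, hTcard]
  have hIsum : ∑ i ∈ I, f {e i} = ∑ t ∈ T.erase t0, f {t} := by
    rw [hI, Finset.sum_image (fun x _ y _ h => e.symm.injective h)]
    exact Finset.sum_congr rfl fun t _ => by rw [e.apply_symm_apply]
  have hcheap : ∑ i ∈ Finset.univ.filter
        (fun i : Fin (Fintype.card V) => (i : ℕ) < k - 1), f {e i}
      ≤ ∑ t ∈ T.erase t0, f {t} := by
    rw [← hIsum]
    exact sum_smallest_le (fun i => f {e i}) hsorted I hIcard
  -- Arithmetic
  have hkpos : (0 : ℝ) < (k : ℝ) := by exact_mod_cast (by omega : 0 < k)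
  have hOPTnn : 0 ≤ OPT := Finset.sum_nonneg fun q _ => hnn q
  have hTnn : 0 ≤ ∑ t ∈ T, f {t} := Finset.sum_nonneg fun t _ => hnn _
  have h1k : (0:ℝ) < 1 / (k:ℝ) := by positivity
  have key : ∑ t ∈ T.erase t0, f {t} ≤ (1 - 1 / (k:ℝ)) * OPT := by
    have ht0ge : (1 / (k:ℝ)) * ∑ t ∈ T, f {t} ≤ f {t0} := by
      rw [div_mul_eq_mul_div, one_mul, div_le_iff₀ hkpos]
      linarith [hkmax]
    have : ∑ t ∈ T.erase t0, f {t} ≤ (1 - 1 / (k:ℝ)) * ∑ t ∈ T, f {t} := by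
      have := hSsum
      nlinarith
    refine this.trans ?_
    have h1 : (0:ℝ) ≤ 1 - 1 / (k:ℝ) := by
      have : 1 / (k:ℝ) ≤ 1 / 2 := by
        apply one_div_le_one_div_of_le <;> [norm_num; exact_mod_cast hk2]
      linarith
    exact mul_le_mul_of_nonneg_left hTsum h1
  have := hcheap.trans key
  linarith
end

section
/- Let f be a non-negative monotone submodular function and P* an optimal k-partition of V. If the elements are ordered v_1,...,v_n with f({v_1}) ≤ ... ≤ f({v_n}), then f(P*) ≥ Σ_{i=1}^{k} f({v_i}). In particular f(P*) ≥ max{ f(V), Σ_{i=1}^{k} f({v_i}) }. -/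
/-- Lower bound on the optimum of monotone submodular `k`-partition: if the elements are
ordered `v_1, ..., v_n` with `f({v_1}) ≤ ... ≤ f({v_n})` and `P*` is an optimal
`k`-partition, then `f(P*) ≥ Σ_{i=1}^{k} f({v_i})`; in particular
`f(P*) ≥ max{f(V), Σ_{i=1}^{k} f({v_i})}`. -/
theorem optimum_lower_bound_monotone {V : Type*} [Fintype V] [DecidableEq V]
    (f : Finset V → ℝ)
    (hsub : ∀ A B : Finset V, f (A ∩ B) + f (A ∪ B) ≤ f A + f B)
    (hmono : ∀ A B : Finset V, A ⊆ B → f A ≤ f B)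
    (hnn : ∀ A : Finset V, 0 ≤ f A)
    (k : ℕ) (hk2 : 2 ≤ k) (hkn : k ≤ Fintype.card V)
    (e : Fin (Fintype.card V) ≃ V)
    (hsorted : ∀ i j : Fin (Fintype.card V), i ≤ j → f {e i} ≤ f {e j})
    (Pstar : Finset (Finset V)) (hPstar : IsPartition Pstar) (hPk : Pstar.card = k)
    (hopt : ∀ Q : Finset (Finset V), IsPartition Q → Q.card = k →
      ∑ p ∈ Pstar, f p ≤ ∑ q ∈ Q, f q) :
    (∑ i ∈ Finset.univ.filter (fun i : Fin (Fintype.card V) => (i : ℕ) < k), f {e i})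
      ≤ ∑ p ∈ Pstar, f p ∧
    max (f (Finset.univ : Finset V))
        (∑ i ∈ Finset.univ.filter (fun i : Fin (Fintype.card V) => (i : ℕ) < k), f {e i})
      ≤ ∑ p ∈ Pstar, f p := by
  obtain ⟨hne, hdisj, hcover⟩ := hPstar
  have hpos : 0 < Fintype.card V := lt_of_lt_of_le (by norm_num) (hk2.trans hkn)
  -- subadditivity: f of union of a nonempty family is at most the sum
  have hsup : ∀ (P : Finset (Finset V)), P.Nonempty → f (P.sup id) ≤ ∑ p ∈ P, f p := by
    intro P hP
    induction hP using Finset.Nonempty.cons_induction with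
    | singleton a => simp
    | cons a s h hs ih =>
      rw [Finset.sup_cons, Finset.sum_cons]
      have h1 := hsub a (s.sup id)
      have h2 := hnn (a ∩ s.sup id)
      have : f (id a ⊔ s.sup id) = f (a ∪ s.sup id) := rfl
      rw [this]
      linarith
  have hPne : Pstar.Nonempty := Finset.card_pos.mp (by omega)
  have hV : f (Finset.univ : Finset V) ≤ ∑ p ∈ Pstar, f p := by
    calc f (Finset.univ : Finset V) = f (Pstar.sup id) := by rw [hcover]
      _ ≤ _ := hsup Pstar hPne
  -- choose a representative of each part
  let u : Finset V → V := fun p => if h : p.Nonempty then h.choose else e ⟨0, hpos⟩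
  have hu : ∀ p ∈ Pstar, u p ∈ p := by
    intro p hp
    simp only [u, dif_pos (hne p hp)]
    exact (hne p hp).choose_spec
  have huinj : ∀ p ∈ Pstar, ∀ q ∈ Pstar, u p = u q → p = q := by
    intro p hp q hq hpq
    by_contra hne'
    have hd : Disjoint p q := hdisj hp hq hne'
    exact Finset.disjoint_left.mp hd (hu p hp) (hpq ▸ hu q hq)
  let w : Finset V → Fin (Fintype.card V) := fun p => e.symm (u p)
  have hwinj : Set.InjOn w Pstar := by
    intro p hp q hq hpq
    exact huinj p hp q hq (e.symm.injective hpq)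
  set S : Finset (Fin (Fintype.card V)) := Pstar.image w with hSdef
  have hS : S.card = k := by
    rw [hSdef, Finset.card_image_of_injOn hwinj, hPk]
  -- the order embedding enumerating S
  set m := S.orderEmbOfFin hS with hm
  have hle : ∀ i : ℕ, ∀ h : i < k, i ≤ (m ⟨i, h⟩ : ℕ) := by
    intro i
    induction i with
    | zero => intro h; exact Nat.zero_le _
    | succ i ih =>
      intro h
      have h' : i < k := by omega
      have h1 := ih h'
      have h2 : m ⟨i, h'⟩ < m ⟨i + 1, h⟩ :=
        m.strictMono (by simp [Fin.lt_def])
      rw [Fin.lt_def] at h2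
      omega
  -- rewrite the filtered sum as a sum over Fin k
  have himg : Finset.univ.filter (fun i : Fin (Fintype.card V) => (i : ℕ) < k)
      = Finset.univ.image (Fin.castLE hkn) := by
    ext i
    simp only [Finset.mem_filter, Finset.mem_univ, true_and, Finset.mem_image]
    constructor
    · intro h; exact ⟨⟨(i : ℕ), h⟩, rfl⟩
    · rintro ⟨j, -, rfl⟩; exact j.isLt
  have hSimg : Finset.univ.image (fun i : Fin k => m i) = S := by
    ext x
    simp only [Finset.mem_image, Finset.mem_univ, true_and]
    have hr := S.range_orderEmbOfFin hS
    constructor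
    · rintro ⟨i, rfl⟩
      have : (m i : Fin (Fintype.card V)) ∈ Set.range (m : Fin k → Fin (Fintype.card V)) := ⟨i, rfl⟩
      rw [hr] at this; exact this
    · intro hx
      have : x ∈ Set.range (m : Fin k → Fin (Fintype.card V)) := by rw [hr]; exact hx
      exact this
  have hfilter_sum : (∑ i ∈ Finset.univ.filter (fun i : Fin (Fintype.card V) => (i : ℕ) < k), f {e i})
      = ∑ j : Fin k, f {e (Fin.castLE hkn j)} := by
    rw [himg, Finset.sum_image (fun a _ b _ h => Fin.castLE_injective hkn h)]
  have hS_sum : (∑ j ∈ S, f {e j}) = ∑ j : Fin k, f {e (m j)} := by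
    rw [← hSimg, Finset.sum_image (fun a _ b _ h => m.injective h)]
  have key : (∑ i ∈ Finset.univ.filter (fun i : Fin (Fintype.card V) => (i : ℕ) < k), f {e i})
      ≤ ∑ j ∈ S, f {e j} := by
    rw [hfilter_sum, hS_sum]
    apply Finset.sum_le_sum
    intro j _
    apply hsorted
    rw [Fin.le_def]
    simpa using hle (j : ℕ) j.isLt
  have hrep : (∑ j ∈ S, f {e j}) ≤ ∑ p ∈ Pstar, f p := by
    rw [hSdef, Finset.sum_image hwinj]
    apply Finset.sum_le_sum
    intro p hp
    have : ({e (w p)} : Finset V) ⊆ p := by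
      simp only [w, Equiv.apply_symm_apply, Finset.singleton_subset_iff]
      exact hu p hp
    exact hmono _ _ this
  refine ⟨key.trans hrep, max_le hV (key.trans hrep)⟩
end

section
/- Let f be a submodular function on V and let P, P' be partitions of V with |P| < k < |P'|. Suppose there exists b ∈ ℝ with f(P) − b|P| = f(P') − b|P'| and f(P') − b|P'| ≤ f(Q) − b|Q| for every partition Q of V. Then for every k-partition P* of V, f(P*) ≥ ((|P'| − k)/(|P'| − |P|)) f(P) + ((k − |P|)/(|P'| − |P|)) f(P'). -/
theorem interpolation_eq_of_sub_mul_eq {x₀ x₁ x y₀ y₁ b : ℝ} (hx : x₀ ≠ x₁)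
    (heq : y₀ - b * x₀ = y₁ - b * x₁) :
    (x₁ - x) / (x₁ - x₀) * y₀ + (x - x₀) / (x₁ - x₀) * y₁ = y₁ + b * (x - x₁) := by
  have hx' : x₁ - x₀ ≠ 0 := sub_ne_zero.mpr hx.symm
  field_simp
  linear_combination (x₁ - x) * heq

theorem interpolation_le_of_sub_mul_le {x₀ x₁ x y₀ y₁ y b : ℝ} (hx : x₀ ≠ x₁)
    (heq : y₀ - b * x₀ = y₁ - b * x₁) (hle : y₁ - b * x₁ ≤ y - b * x) :
    (x₁ - x) / (x₁ - x₀) * y₀ + (x - x₀) / (x₁ - x₀) * y₁ ≤ y := by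
  rw [interpolation_eq_of_sub_mul_eq hx heq]
  linarith

theorem pps_interpolation_lower_bound_general {V : Type*} [Fintype V] [DecidableEq V]
    (f : Finset V → ℝ)
    (k : ℕ) (b : ℝ)
    (P P' : Finset (Finset V))
    (hlt : P.card < k) (hgt : k < P'.card)
    (heq : (∑ p ∈ P, f p) - b * (P.card : ℝ) = (∑ p ∈ P', f p) - b * (P'.card : ℝ))
    (hmin : ∀ Q : Finset (Finset V), IsPartition Q →
      (∑ p ∈ P', f p) - b * (P'.card : ℝ) ≤ (∑ q ∈ Q, f q) - b * (Q.card : ℝ)) :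
    ∀ Pstar : Finset (Finset V), IsPartition Pstar → Pstar.card = k →
      (((P'.card : ℝ) - k) / ((P'.card : ℝ) - P.card)) * (∑ p ∈ P, f p)
        + (((k : ℝ) - P.card) / ((P'.card : ℝ) - P.card)) * (∑ p ∈ P', f p)
      ≤ ∑ p ∈ Pstar, f p := by
  rintro Pstar hPstar rfl
  have hcard : (P.card : ℝ) ≠ P'.card := by exact_mod_cast (hlt.trans hgt).ne
  exact interpolation_le_of_sub_mul_le hcard heq (hmin Pstar hPstar)

/-- Lower bound on the optimum value of submodular `k`-partition from two consecutive
partitions in a principal partition sequence with `|P| < k < |P'|`: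
`f(P*) ≥ ((|P'| − k)/(|P'| − |P|))·f(P) + ((k − |P|)/(|P'| − |P|))·f(P')` for every
`k`-partition `P*`. -/
theorem pps_interpolation_lower_bound {V : Type*} [Fintype V] [DecidableEq V]
    (f : Finset V → ℝ)
    (hsub : ∀ A B : Finset V, f (A ∩ B) + f (A ∪ B) ≤ f A + f B)
    (k : ℕ) (b : ℝ)
    (P P' : Finset (Finset V)) (hP : IsPartition P) (hP' : IsPartition P')
    (hlt : P.card < k) (hgt : k < P'.card)
    (heq : (∑ p ∈ P, f p) - b * (P.card : ℝ) = (∑ p ∈ P', f p) - b * (P'.card : ℝ))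
    (hmin : ∀ Q : Finset (Finset V), IsPartition Q →
      (∑ p ∈ P', f p) - b * (P'.card : ℝ) ≤ (∑ q ∈ Q, f q) - b * (Q.card : ℝ)) :
    ∀ Pstar : Finset (Finset V), IsPartition Pstar → Pstar.card = k →
      (((P'.card : ℝ) - k) / ((P'.card : ℝ) - P.card)) * (∑ p ∈ P, f p)
        + (((k : ℝ) - P.card) / ((P'.card : ℝ) - P.card)) * (∑ p ∈ P', f p)
      ≤ ∑ p ∈ Pstar, f p :=
  pps_interpolation_lower_bound_general f k b P P' hlt hgt heq hmin
end

section
/- For all integers A, B ≥ 1, max over c ∈ [0,1] of min{ ((A+B)/(A+B+1))·(1 + ((1+A)/(A+B))·c), (A+B)/A − (B/A)·c } ≤ 1 + AB/(A + A² + AB + B² + B) ≤ 4/3 − (1/3)·1/(3(A+B)/4 + 1). -/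
/-- The key inequality in the `4/3` approximation analysis for monotone submodular
`k`-partition: for integers `A, B ≥ 1` and every `c ∈ [0,1]`,
`min{((A+B)/(A+B+1))·(1 + ((1+A)/(A+B))·c), (A+B)/A − (B/A)·c}
  ≤ 1 + AB/(A + A² + AB + B² + B) ≤ 4/3 − (1/3)/(3(A+B)/4 + 1)`. -/
theorem monotone_maxmin_inequality (A B : ℕ) (hA : 1 ≤ A) (hB : 1 ≤ B) :
    (∀ c : ℝ, 0 ≤ c → c ≤ 1 →
      min (((A : ℝ) + B) / ((A : ℝ) + B + 1) * (1 + ((1 + (A : ℝ)) / ((A : ℝ) + B)) * c))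
          (((A : ℝ) + B) / A - ((B : ℝ) / A) * c)
        ≤ 1 + (A : ℝ) * B / ((A : ℝ) + (A : ℝ) ^ 2 + (A : ℝ) * B + (B : ℝ) ^ 2 + B))
    ∧ 1 + (A : ℝ) * B / ((A : ℝ) + (A : ℝ) ^ 2 + (A : ℝ) * B + (B : ℝ) ^ 2 + B)
        ≤ 4 / 3 - (1 / 3) * (1 / (3 * ((A : ℝ) + B) / 4 + 1)) := by
  have ha : (1 : ℝ) ≤ A := by exact_mod_cast hA
  have hb : (1 : ℝ) ≤ B := by exact_mod_cast hB
  set a : ℝ := (A : ℝ)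
  set b : ℝ := (B : ℝ)
  have hD : (0 : ℝ) < a + a ^ 2 + a * b + b ^ 2 + b := by nlinarith
  have hab : (0 : ℝ) < a + b := by linarith
  have hab1 : (0 : ℝ) < a + b + 1 := by linarith
  have ha0 : (0 : ℝ) < a := by linarith
  have hD' := hD.ne'
  have hab' := hab.ne'
  have hab1' := hab1.ne'
  have ha0' := ha0.ne'
  constructor
  · intro c hc0 hc1
    by_cases h : c ≤ (a + a * b + b ^ 2 + b) / (a + a ^ 2 + a * b + b ^ 2 + b)
    · refine le_trans (min_le_left _ _) ?_
      rw [← sub_nonneg]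
      have e : 1 + a * b / (a + a ^ 2 + a * b + b ^ 2 + b) -
          (a + b) / (a + b + 1) * (1 + (1 + a) / (a + b) * c) =
          (1 + a) * ((a + a * b + b ^ 2 + b) - c * (a + a ^ 2 + a * b + b ^ 2 + b)) /
            ((a + b + 1) * (a + a ^ 2 + a * b + b ^ 2 + b)) := by
        field_simp
        ring
      rw [e]
      have h' := (le_div_iff₀ hD).mp h
      exact div_nonneg (mul_nonneg (by linarith) (by linarith))
        (mul_nonneg hab1.le hD.le)
    · push_neg at h
      refine le_trans (min_le_right _ _) ?_
      rw [← sub_nonneg]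
      have e : 1 + a * b / (a + a ^ 2 + a * b + b ^ 2 + b) -
          ((a + b) / a - b / a * c) =
          b * (c * (a + a ^ 2 + a * b + b ^ 2 + b) - (a + a * b + b ^ 2 + b)) /
            (a * (a + a ^ 2 + a * b + b ^ 2 + b)) := by
        field_simp
        ring
      rw [e]
      have h' := (div_lt_iff₀ hD).mp h
      exact div_nonneg (mul_nonneg (by linarith) (by linarith))
        (mul_nonneg ha0.le hD.le)
  · rw [← sub_nonneg]
    have e : 4 / 3 - 1 / 3 * (1 / (3 * (a + b) / 4 + 1)) -
        (1 + a * b / (a + a ^ 2 + a * b + b ^ 2 + b)) =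
        (a - b) ^ 2 * (a + b + 1) / ((3 * (a + b) + 4) * (a + a ^ 2 + a * b + b ^ 2 + b)) := by
      have h5 : (3 : ℝ) * (a + b) + 4 ≠ 0 := by nlinarith
      have h6 : (3 : ℝ) * (a + b) / 4 + 1 ≠ 0 := by
        intro hc; apply h5; linarith
      field_simp
      ring
    rw [e]
    exact div_nonneg (mul_nonneg (sq_nonneg _) hab1.le)
      (mul_nonneg (by linarith) hD.le)
end

section
/- For all integers A, B ≥ 1, max over c ∈ [0,1] of min{ ((A+B)/(A+B+1))·(2 + ((A−B+1)/(A+B))·c), (A+B)/A − (B/A)·c } ≤ 2 − 1/((A+B)/2 + 1). -/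
/-- The key inequality in the `2 − 2/(n+1)` approximation analysis for posimodular
submodular `k`-partition: for integers `A, B ≥ 1` and every `c ∈ [0,1]`,
`min{((A+B)/(A+B+1))·(2 + ((A−B+1)/(A+B))·c), (A+B)/A − (B/A)·c}
  ≤ 2 − 1/((A+B)/2 + 1)`. -/
theorem posimodular_maxmin_inequality (A B : ℕ) (hA : 1 ≤ A) (hB : 1 ≤ B) :
    ∀ c : ℝ, 0 ≤ c → c ≤ 1 →
      min (((A : ℝ) + B) / ((A : ℝ) + B + 1)
            * (2 + (((A : ℝ) - B + 1) / ((A : ℝ) + B)) * c))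
          (((A : ℝ) + B) / A - ((B : ℝ) / A) * c)
        ≤ 2 - 1 / (((A : ℝ) + B) / 2 + 1) := by
  intro c hc0 hc1
  set a : ℝ := (A : ℝ) with ha
  set b : ℝ := (B : ℝ) with hb
  have ha1 : (1:ℝ) ≤ a := by rw [ha]; exact_mod_cast hA
  have hb1 : (1:ℝ) ≤ b := by rw [hb]; exact_mod_cast hB
  have haS : (0:ℝ) < a + b := by linarith
  have hS1 : (0:ℝ) < a + b + 1 := by linarith
  have hS2 : (0:ℝ) < a + b + 2 := by linarith
  have hapos : (0:ℝ) < a := by linarith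
  have hR : 2 - 1 / ((a + b) / 2 + 1) = (2 * (a + b) + 2) / ((a + b) + 2) := by
    rw [eq_div_iff (by linarith)]
    field_simp
    ring
  have hX : (a + b) / (a + b + 1) * (2 + ((a - b + 1) / (a + b)) * c)
      = (2 * (a + b) + (a - b + 1) * c) / (a + b + 1) := by
    field_simp
  have hY : (a + b) / a - (b / a) * c = ((a + b) - b * c) / a := by
    field_simp
  rw [hR, hX, hY]
  set m := min ((2 * (a + b) + (a - b + 1) * c) / (a + b + 1)) (((a + b) - b * c) / a)
    with hm
  have h1 : m * (a + b + 1) ≤ 2 * (a + b) + (a - b + 1) * c := by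
    have := min_le_left ((2 * (a + b) + (a - b + 1) * c) / (a + b + 1))
      (((a + b) - b * c) / a)
    rw [le_div_iff₀ hS1] at this
    exact this
  have h2 : m * a ≤ (a + b) - b * c := by
    have := min_le_right ((2 * (a + b) + (a - b + 1) * c) / (a + b + 1))
      (((a + b) - b * c) / a)
    rw [le_div_iff₀ hapos] at this
    exact this
  rw [le_div_iff₀ hS2]
  rcases le_or_gt b a with hba | hab
  · -- A ≥ B: combine with weights b and (a - b + 1)
    have hd : (0:ℝ) < a - b + 1 := by linarith
    have hcomb : m * (a * a + a + b * b + b) ≤ (a + b) * (a + b + 1) := by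
      nlinarith [mul_le_mul_of_nonneg_left h1 (by linarith : (0:ℝ) ≤ b),
        mul_le_mul_of_nonneg_left h2 hd.le]
    nlinarith [mul_le_mul_of_nonneg_right hcomb hS2.le, sq_nonneg (a - b),
      mul_nonneg (sq_nonneg (a - b)) hS2.le]
  · -- A < B: first term alone suffices since (a - b + 1) ≤ 0
    have hd : a - b + 1 ≤ 0 := by
      have hABn : A < B := by
        have : (A:ℝ) < (B:ℝ) := by rw [← ha, ← hb]; exact hab
        exact_mod_cast this
      have hAB : A + 1 ≤ B := hABn
      have : a + 1 ≤ b := by rw [ha, hb]; exact_mod_cast hAB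
      linarith
    have hdc : (a - b + 1) * c ≤ 0 := mul_nonpos_of_nonpos_of_nonneg hd hc0
    nlinarith [mul_le_mul_of_nonneg_right h1 hS2.le, mul_nonneg (neg_nonneg.mpr hdc) hS2.le]
end

section
/- Let n ≥ 5 be odd, V = U ⊎ D with |U| = (n−1)/2 and |D| = (n+1)/2. Define h(S) = g(S ∩ U) + (1+ε)|S ∩ D| where g(T) = 1/2 + |T|/2 for nonempty T ⊆ U and g(∅) = 0, and f(S) = min{ h(S), (n+1)/2 }. Then f is monotone and submodular for all sufficiently small ε > 0. -/
private noncomputable def gg {V : Type*} [DecidableEq V] (S : Finset V) : ℝ :=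
  if S = ∅ then 0 else 1 / 2 + (S.card : ℝ) / 2

private lemma gg_nonneg {V : Type*} [DecidableEq V] (S : Finset V) : 0 ≤ gg S := by
  unfold gg; split <;> positivity

private lemma gg_mono {V : Type*} [DecidableEq V] {S T : Finset V} (h : S ⊆ T) :
    gg S ≤ gg T := by
  unfold gg
  split
  · split <;> positivity
  · rename_i hS
    rw [if_neg (by intro hT; subst hT; exact hS (Finset.subset_empty.mp h))]
    have := Finset.card_le_card h
    have : (S.card : ℝ) ≤ T.card := by exact_mod_cast this
    linarith

private lemma gg_sub {V : Type*} [DecidableEq V] (S T : Finset V) :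
    gg (S ∩ T) + gg (S ∪ T) ≤ gg S + gg T := by
  by_cases hS : S = ∅
  · simp [hS, gg]
  by_cases hT : T = ∅
  · simp [hT, gg]
  have hU : S ∪ T ≠ ∅ := fun h => hS (Finset.subset_empty.mp (h ▸ Finset.subset_union_left))
  have hcard : (S ∩ T).card + (S ∪ T).card = S.card + T.card :=
    Finset.card_inter_add_card_union S T
  have hcard' : ((S ∩ T).card : ℝ) + ((S ∪ T).card : ℝ) = (S.card : ℝ) + T.card := by
    exact_mod_cast hcard
  have h1 : gg (S ∩ T) ≤ 1 / 2 + ((S ∩ T).card : ℝ) / 2 := by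
    unfold gg; split
    · positivity
    · exact le_rfl
  unfold gg at h1
  simp only [gg, if_neg hS, if_neg hT, if_neg hU]
  linarith

private lemma trunc_min (c a b i u : ℝ) (hia : i ≤ a) (hib : i ≤ b)
    (hau : a ≤ u) (hbu : b ≤ u) (hsub : i + u ≤ a + b) :
    min i c + min u c ≤ min a c + min b c := by
  rcases le_or_gt c a with h1 | h1
  · have := min_le_min hib (le_refl c)
    have := min_le_right u c
    rw [min_eq_right h1]
    linarith
  rcases le_or_gt c b with h2 | h2
  · have := min_le_min hia (le_refl c)
    have := min_le_right u c
    rw [min_eq_right h2]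
    linarith
  · rw [min_eq_left h1.le, min_eq_left h2.le]
    have := min_le_left i c
    have := min_le_left u c
    linarith

/-- The function `f(S) = min{g(S ∩ U) + (1+ε)|S ∩ D|, (n+1)/2}` from the tight example
for monotone submodular `k`-partition (where `g(T) = 1/2 + |T|/2` for nonempty `T` and
`g(∅) = 0`, `n ≥ 5` odd, `V = U ⊎ D`, `|U| = (n−1)/2`, `|D| = (n+1)/2`) is monotone and
submodular for all sufficiently small `ε > 0`. -/
theorem tight_example_monotone_submodular (n : ℕ) (hn : 5 ≤ n) (hodd : Odd n)
    {V : Type*} [Fintype V] [DecidableEq V]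
    (U D : Finset V) (hdisj : Disjoint U D) (hcover : U ∪ D = Finset.univ)
    (hU : 2 * U.card = n - 1) (hD : 2 * D.card = n + 1) :
    ∃ ε₀ : ℝ, 0 < ε₀ ∧ ∀ ε : ℝ, 0 < ε → ε ≤ ε₀ →
      (∀ A B : Finset V, A ⊆ B →
          min ((if A ∩ U = ∅ then (0 : ℝ) else 1 / 2 + ((A ∩ U).card : ℝ) / 2)
                + (1 + ε) * ((A ∩ D).card : ℝ)) (((n : ℝ) + 1) / 2)
            ≤ min ((if B ∩ U = ∅ then (0 : ℝ) else 1 / 2 + ((B ∩ U).card : ℝ) / 2)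
                + (1 + ε) * ((B ∩ D).card : ℝ)) (((n : ℝ) + 1) / 2))
      ∧ (∀ A B : Finset V,
          min ((if (A ∩ B) ∩ U = ∅ then (0 : ℝ) else 1 / 2 + (((A ∩ B) ∩ U).card : ℝ) / 2)
                + (1 + ε) * (((A ∩ B) ∩ D).card : ℝ)) (((n : ℝ) + 1) / 2)
          + min ((if (A ∪ B) ∩ U = ∅ then (0 : ℝ) else 1 / 2 + (((A ∪ B) ∩ U).card : ℝ) / 2)
                + (1 + ε) * (((A ∪ B) ∩ D).card : ℝ)) (((n : ℝ) + 1) / 2)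
          ≤ min ((if A ∩ U = ∅ then (0 : ℝ) else 1 / 2 + ((A ∩ U).card : ℝ) / 2)
                + (1 + ε) * ((A ∩ D).card : ℝ)) (((n : ℝ) + 1) / 2)
            + min ((if B ∩ U = ∅ then (0 : ℝ) else 1 / 2 + ((B ∩ U).card : ℝ) / 2)
                + (1 + ε) * ((B ∩ D).card : ℝ)) (((n : ℝ) + 1) / 2)) := by
  refine ⟨1, one_pos, fun ε hε hε1 => ?_⟩
  have hε0 : (0 : ℝ) ≤ 1 + ε := by linarith
  -- h is monotone
  have hmono : ∀ A B : Finset V, A ⊆ B →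
      gg (A ∩ U) + (1 + ε) * ((A ∩ D).card : ℝ)
        ≤ gg (B ∩ U) + (1 + ε) * ((B ∩ D).card : ℝ) := by
    intro A B hAB
    have h1 : gg (A ∩ U) ≤ gg (B ∩ U) :=
      gg_mono (Finset.inter_subset_inter hAB (le_refl U))
    have h2 : (A ∩ D).card ≤ (B ∩ D).card :=
      Finset.card_le_card (Finset.inter_subset_inter hAB (le_refl D))
    have h2' : ((A ∩ D).card : ℝ) ≤ ((B ∩ D).card : ℝ) := by exact_mod_cast h2
    nlinarith
  -- h is submodular
  have hsub : ∀ A B : Finset V,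
      (gg ((A ∩ B) ∩ U) + (1 + ε) * (((A ∩ B) ∩ D).card : ℝ))
      + (gg ((A ∪ B) ∩ U) + (1 + ε) * (((A ∪ B) ∩ D).card : ℝ))
      ≤ (gg (A ∩ U) + (1 + ε) * ((A ∩ D).card : ℝ))
        + (gg (B ∩ U) + (1 + ε) * ((B ∩ D).card : ℝ)) := by
    intro A B
    have eU1 : (A ∩ B) ∩ U = (A ∩ U) ∩ (B ∩ U) := by
      ext x; simp only [Finset.mem_inter]; tauto
    have eU2 : (A ∪ B) ∩ U = (A ∩ U) ∪ (B ∩ U) := by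
      ext x; simp only [Finset.mem_inter, Finset.mem_union]; tauto
    have eD1 : (A ∩ B) ∩ D = (A ∩ D) ∩ (B ∩ D) := by
      ext x; simp only [Finset.mem_inter]; tauto
    have eD2 : (A ∪ B) ∩ D = (A ∩ D) ∪ (B ∩ D) := by
      ext x; simp only [Finset.mem_inter, Finset.mem_union]; tauto
    have hg := gg_sub (A ∩ U) (B ∩ U)
    have hc : ((A ∩ D) ∩ (B ∩ D)).card + ((A ∩ D) ∪ (B ∩ D)).card
        = (A ∩ D).card + (B ∩ D).card := Finset.card_inter_add_card_union _ _
    have hc' : (((A ∩ D) ∩ (B ∩ D)).card : ℝ) + (((A ∩ D) ∪ (B ∩ D)).card : ℝ)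
        = ((A ∩ D).card : ℝ) + ((B ∩ D).card : ℝ) := by exact_mod_cast hc
    rw [eU1, eU2, eD1, eD2]
    nlinarith
  constructor
  · intro A B hAB
    exact min_le_min (hmono A B hAB) (le_refl _)
  · intro A B
    exact trunc_min _ _ _ _ _
      (hmono (A ∩ B) A Finset.inter_subset_left)
      (hmono (A ∩ B) B Finset.inter_subset_right)
      (hmono A (A ∪ B) Finset.subset_union_left)
      (hmono B (A ∪ B) Finset.subset_union_right)
      (hsub A B)
end
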